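/- Let α > 2, b > 0, and z_0 > 0 satisfy z_0^α < b. Then ∫_{z_0}^∞ ( 1 − 1/(1 + b·z^{−α}) ) · z dz = ( π / ( α · sin(2π/α) ) ) · b^{2/α} − (z_0^2 / 2) · ₂F₁( 1, 2/α ; 1 + 2/α ; −z_0^α / b ), where ₂F₁ is the Gauss hypergeometric function. -/

import Mathlib

/-!
For `z > 0` the integrand equals `b · z / (z^α + b)`, so the integral over `(z₀, ∞)` is the
integral over `(0, ∞)` minus the one over `(0, z₀]`.

Over `(0, ∞)`, the substitutions `z^α = y`, `y = b t` and `x = t / (1 + t)` turn it into the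
Beta integral `B(s, 1 - s) = Γ(s) Γ(1 - s) = π / sin (π s)` with `s = 2 / α`.

Over `(0, z₀]`, the hypothesis `z₀^α < b` makes `1 / (z^α + b)` a convergent geometric series
in `-z^α / b`, which may be integrated termwise. The resulting coefficients `1 / (α n + 2)` are
those of `₂F₁(1, c; 1 + c; ·)` with `c = 2 / α`, because `(1 + c)_n / (c)_n = (c + n) / c`.
-/

open MeasureTheory Real

/-- The Gauss (ordinary) hypergeometric function `₂F₁(a, b; c; z)` for real
arguments, defined for `|z| < 1` by its power series
`Σ_{n≥0} ((a)_n (b)_n / (c)_n) zⁿ / n!`, where `(x)_n` is the rising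
(ascending Pochhammer) factorial. -/
noncomputable def hyp2F1 (a b c z : ℝ) : ℝ :=
  ∑' n : ℕ,
    (ascPochhammer ℝ n).eval a * (ascPochhammer ℝ n).eval b /
      (ascPochhammer ℝ n).eval c * z ^ n / (Nat.factorial n)

open Set

theorem integral_Ioo_rpow_mul_one_sub_rpow {a b : ℝ} (ha : 0 < a) (hb : 0 < b) :
    ∫ x in Ioo (0 : ℝ) 1, x ^ (a - 1) * (1 - x) ^ (b - 1) = Gamma a * Gamma b / Gamma (a + b) := by
  have hB : Complex.betaIntegral a b
      = ((∫ x in Ioo (0 : ℝ) 1, x ^ (a - 1) * (1 - x) ^ (b - 1) : ℝ) : ℂ) := by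
    rw [Complex.betaIntegral, intervalIntegral.integral_of_le zero_le_one,
      integral_Ioc_eq_integral_Ioo]
    refine (setIntegral_congr_fun measurableSet_Ioo fun x ⟨hx0, hx1⟩ => ?_).trans
      integral_complex_ofReal
    rw [Complex.ofReal_mul, Complex.ofReal_cpow hx0.le, Complex.ofReal_cpow (sub_pos.2 hx1).le]
    push_cast
    rfl
  have key := Complex.betaIntegral_eq_Gamma_mul_div a b (by simpa) (by simpa)
  rw [hB, ← Complex.ofReal_add, Complex.Gamma_ofReal, Complex.Gamma_ofReal,
    Complex.Gamma_ofReal] at key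
  exact_mod_cast key

theorem injOn_div_one_add_Ioi : InjOn (fun t : ℝ => t / (1 + t)) (Ioi 0) := by
  intro s (hs : 0 < s) t (ht : 0 < t) hst
  field_simp at hst
  linarith

theorem image_div_one_add_Ioi : (fun t : ℝ => t / (1 + t)) '' Ioi 0 = Ioo 0 1 := by
  ext x
  constructor
  · rintro ⟨t, ht : 0 < t, rfl⟩
    exact ⟨by positivity, (div_lt_one (by positivity)).2 (by linarith)⟩
  · rintro ⟨hx0, hx1⟩
    have h1x : 0 < 1 - x := sub_pos.2 hx1
    refine ⟨x / (1 - x), div_pos hx0 h1x, ?_⟩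
    field_simp
    ring

theorem integral_Ioi_rpow_div_one_add_rpow {a b : ℝ} (ha : 0 < a) (hb : 0 < b) :
    ∫ t in Ioi (0 : ℝ), t ^ (a - 1) / (1 + t) ^ (a + b) = Gamma a * Gamma b / Gamma (a + b) := by
  have hderiv : ∀ t ∈ Ioi (0 : ℝ),
      HasDerivWithinAt (fun t : ℝ => t / (1 + t)) ((1 + t) ^ (-2 : ℝ)) (Ioi 0) t := by
    intro t (ht : 0 < t)
    have h1t : 0 < 1 + t := by positivity
    refine (((hasDerivAt_id t).div ((hasDerivAt_id t).const_add 1) h1t.ne').congr_deriv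
      ?_).hasDerivWithinAt
    rw [rpow_neg h1t.le, rpow_two, id]
    field_simp
    ring
  have key := integral_image_eq_integral_abs_deriv_smul measurableSet_Ioi hderiv
    injOn_div_one_add_Ioi fun x => x ^ (a - 1) * (1 - x) ^ (b - 1)
  rw [image_div_one_add_Ioi, integral_Ioo_rpow_mul_one_sub_rpow ha hb] at key
  rw [key]
  refine setIntegral_congr_fun measurableSet_Ioi fun t (ht : 0 < t) => ?_
  have h1t : 0 < 1 + t := by positivity
  have hcompl : 1 - t / (1 + t) = (1 + t)⁻¹ := by field_simp; ring
  have hexp : -(a + b) = -2 + -(a - 1) + -(b - 1) := by ring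
  rw [smul_eq_mul, abs_of_pos (by positivity), hcompl, div_rpow ht.le h1t.le, inv_rpow h1t.le,
    ← rpow_neg h1t.le, div_eq_mul_inv, div_eq_mul_inv, ← rpow_neg h1t.le, ← rpow_neg h1t.le,
    hexp, rpow_add h1t, rpow_add h1t]
  ring

theorem integral_Ioi_rpow_div_one_add {s : ℝ} (hs0 : 0 < s) (hs1 : s < 1) :
    ∫ t in Ioi (0 : ℝ), t ^ (s - 1) / (1 + t) = π / sin (π * s) := by
  have key := integral_Ioi_rpow_div_one_add_rpow hs0 (sub_pos.2 hs1)
  simp only [add_sub_cancel, rpow_one, Gamma_one, div_one] at key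
  rw [key, Gamma_mul_Gamma_one_sub]

theorem integral_Ioi_rpow_div_add {s c : ℝ} (hs0 : 0 < s) (hs1 : s < 1) (hc : 0 < c) :
    ∫ y in Ioi (0 : ℝ), y ^ (s - 1) / (y + c) = π / sin (π * s) * c ^ (s - 1) := by
  have key := integral_comp_mul_left_Ioi (fun y => y ^ (s - 1) / (y + c)) 0 hc
  rw [mul_zero, smul_eq_mul, eq_inv_mul_iff_mul_eq₀ hc.ne'] at key
  rw [← key]
  have hscale : ∀ x ∈ Ioi (0 : ℝ),
      (c * x) ^ (s - 1) / (c * x + c) = c ^ (s - 2) * (x ^ (s - 1) / (1 + x)) := by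
    intro x (hx : 0 < x)
    rw [mul_rpow hc.le hx.le, show s - 1 = (s - 2) + 1 by ring, rpow_add_one hc.ne']
    field_simp
    ring
  rw [setIntegral_congr_fun measurableSet_Ioi hscale, integral_const_mul,
    integral_Ioi_rpow_div_one_add hs0 hs1, show s - 1 = (s - 2) + 1 by ring, rpow_add_one hc.ne']
  ring

theorem integral_Ioi_rpow_div_rpow_add {α β b : ℝ} (hβ : 0 < β) (hβα : β < α) (hb : 0 < b) :
    ∫ z in Ioi (0 : ℝ), z ^ (β - 1) / (z ^ α + b)
      = π / (α * sin (π * (β / α))) * b ^ (β / α - 1) := by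
  have hα : 0 < α := hβ.trans hβα
  have key := integral_comp_rpow_Ioi_of_pos (g := fun y => y ^ (β / α - 1) / (y + b)) hα
  rw [integral_Ioi_rpow_div_add (by positivity) ((div_lt_one hα).2 hβα) hb] at key
  have hsub : ∀ z ∈ Ioi (0 : ℝ), (α * z ^ (α - 1)) • ((z ^ α) ^ (β / α - 1) / (z ^ α + b))
      = α * (z ^ (β - 1) / (z ^ α + b)) := by
    intro z (hz : 0 < z)
    rw [smul_eq_mul, ← rpow_mul hz.le, mul_sub, mul_div_cancel₀ _ hα.ne', mul_one,
      mul_div_assoc', ← mul_div_assoc, mul_assoc, ← rpow_add hz]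
    ring_nf
  rw [setIntegral_congr_fun measurableSet_Ioi hsub, integral_const_mul] at key
  calc _ = (α * ∫ z in Ioi (0 : ℝ), z ^ (β - 1) / (z ^ α + b)) / α := by field_simp
    _ = _ := by rw [key]; ring

theorem integrableOn_Ioi_rpow_div_rpow_add {α β b : ℝ} (hβ : 0 < β) (hβα : β < α) (hb : 0 < b) :
    IntegrableOn (fun z : ℝ => z ^ (β - 1) / (z ^ α + b)) (Ioi 0) := by
  have hmeas : AEStronglyMeasurable (fun z : ℝ => z ^ (β - 1) / (z ^ α + b)) :=
    (by fun_prop : Measurable fun z : ℝ => z ^ (β - 1) / (z ^ α + b)).aestronglyMeasurable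
  rw [← Ioc_union_Ioi_eq_Ioi zero_le_one, integrableOn_union]
  constructor
  · have hdom : IntegrableOn (fun z : ℝ => b⁻¹ * z ^ (β - 1)) (Ioc 0 1) :=
      ((intervalIntegrable_iff_integrableOn_Ioc_of_le zero_le_one).1
        (intervalIntegral.intervalIntegrable_rpow' (by linarith))).const_mul b⁻¹
    refine hdom.mono' hmeas.restrict (ae_restrict_of_forall_mem measurableSet_Ioc ?_)
    rintro z ⟨hz, -⟩
    rw [norm_of_nonneg (by positivity), ← div_eq_inv_mul]
    exact div_le_div_of_nonneg_left (by positivity) hb (by simpa using rpow_nonneg hz.le α)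
  · refine (integrableOn_Ioi_rpow_of_lt (a := β - 1 - α) (by linarith) one_pos).mono'
      hmeas.restrict (ae_restrict_of_forall_mem measurableSet_Ioi ?_)
    intro z (hz : 1 < z)
    have hz0 : 0 < z := one_pos.trans hz
    rw [norm_of_nonneg (by positivity), rpow_sub hz0 (β - 1) α]
    exact div_le_div_of_nonneg_left (rpow_nonneg hz0.le _) (rpow_pos_of_pos hz0 α)
      (le_add_of_nonneg_right hb.le)

theorem ascPochhammer_eval_one_add_mul {c : ℝ} (n : ℕ) :
    (ascPochhammer ℝ n).eval (1 + c) * c = (ascPochhammer ℝ n).eval c * (c + n) := by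
  rw [← ascPochhammer_succ_eval, ascPochhammer_succ_left]
  simp [Polynomial.eval_comp, add_comm, mul_comm]

theorem hyp2F1_one_self_one_add {c : ℝ} (hc : 0 < c) (x : ℝ) :
    hyp2F1 1 c (1 + c) x = ∑' n : ℕ, c / (c + n) * x ^ n := by
  refine tsum_congr fun n => ?_
  have hpoch : (ascPochhammer ℝ n).eval (1 + c)
      = (ascPochhammer ℝ n).eval c * (c + n) / c := by
    rw [← ascPochhammer_eval_one_add_mul, mul_div_cancel_right₀ _ hc.ne']
  have := ascPochhammer_pos n c hc
  rw [ascPochhammer_eval_one, hpoch]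
  field_simp

theorem rpow_sub_one_mul_mul_rpow_pow {z : ℝ} (hz : 0 < z) (α β c : ℝ) (n : ℕ) :
    z ^ (β - 1) * (c * z ^ α) ^ n = c ^ n * z ^ (α * n + β - 1) := by
  rw [mul_pow, ← rpow_mul_natCast hz.le, add_sub_assoc, rpow_add hz]
  ring

theorem integrableOn_Ioc_rpow_mul_mul_rpow_pow {α β : ℝ} (hα : 0 ≤ α) (hβ : 0 < β)
    (c z₀ : ℝ) (n : ℕ) :
    IntegrableOn (fun z : ℝ => z ^ (β - 1) * (c * z ^ α) ^ n) (Ioc 0 z₀) := by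
  have hrpow : IntegrableOn (fun z : ℝ => c ^ n * z ^ (α * n + β - 1)) (Ioc 0 z₀) :=
    ((intervalIntegral.intervalIntegrable_rpow' (by nlinarith)).def'.mono_set
      Ioc_subset_uIoc).const_mul _
  exact hrpow.congr_fun (fun z hz => (rpow_sub_one_mul_mul_rpow_pow hz.1 α β c n).symm)
    measurableSet_Ioc

theorem integral_Ioc_rpow_mul_mul_rpow_pow {α β z₀ : ℝ} (hα : 0 ≤ α) (hβ : 0 < β)
    (hz₀ : 0 ≤ z₀) (c : ℝ) (n : ℕ) :
    ∫ z in Ioc 0 z₀, z ^ (β - 1) * (c * z ^ α) ^ n = c ^ n * z₀ ^ (α * n + β) / (α * n + β) := by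
  have hexp : 0 < α * n + β := by positivity
  rw [setIntegral_congr_fun measurableSet_Ioc
      fun z hz => rpow_sub_one_mul_mul_rpow_pow hz.1 α β c n,
    integral_const_mul, ← intervalIntegral.integral_of_le hz₀, integral_rpow (Or.inl (by linarith)),
    sub_add_cancel, zero_rpow hexp.ne', sub_zero, mul_div_assoc]

theorem hasSum_mul_pow_neg_inv_mul {w x b : ℝ} (h : |x| < b) :
    HasSum (fun n : ℕ => w * (-b⁻¹ * x) ^ n) (b * w / (x + b)) := by
  have hb : 0 < b := (abs_nonneg x).trans_lt h
  have hr : |-b⁻¹ * x| < 1 := by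
    rw [abs_mul, abs_neg, abs_inv, abs_of_pos hb, inv_mul_lt_one₀ hb]
    exact h
  have hsum : w * (1 - -b⁻¹ * x)⁻¹ = b * w / (x + b) := by
    rw [show 1 - -b⁻¹ * x = (x + b) / b by field_simp; ring, inv_div]
    ring
  exact hsum ▸ (hasSum_geometric_of_abs_lt_one hr).mul_left w

theorem rpow_add_mul_natCast_eq_pow_mul {z : ℝ} (hz : 0 < z) (α β : ℝ) (n : ℕ) :
    z ^ (α * n + β) = (z ^ α) ^ n * z ^ β := by
  rw [rpow_add hz, rpow_mul_natCast hz.le]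

theorem integral_Ioc_rpow_div_rpow_add {α β b z₀ : ℝ} (hα : 0 < α) (hβ : 0 < β) (hz₀ : 0 < z₀)
    (h : z₀ ^ α < b) :
    ∫ z in Ioc 0 z₀, z ^ (β - 1) / (z ^ α + b)
      = z₀ ^ β / (β * b) * hyp2F1 1 (β / α) (1 + β / α) (-(z₀ ^ α / b)) := by
  have hb : 0 < b := (rpow_pos_of_pos hz₀ α).trans h
  set q := z₀ ^ α / b with hq
  have hq0 : 0 ≤ q := by positivity
  have hq1 : q < 1 := (div_lt_one hb).2 h
  set F : ℕ → ℝ → ℝ := fun n z => z ^ (β - 1) * (-b⁻¹ * z ^ α) ^ n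
  have hsum : ∀ z ∈ Ioc 0 z₀, ∑' n, F n z = b * (z ^ (β - 1) / (z ^ α + b)) := by
    rintro z ⟨hz, hzz₀⟩
    have hzα : |z ^ α| < b := by
      rw [abs_of_nonneg (rpow_nonneg hz.le α)]
      exact (rpow_le_rpow hz.le hzz₀ hα.le).trans_lt h
    rw [(hasSum_mul_pow_neg_inv_mul hzα).tsum_eq, mul_div_assoc]
  have hnorm : ∀ n : ℕ, ∫ z in Ioc 0 z₀, ‖F n z‖ = z₀ ^ β / (α * n + β) * q ^ n := by
    intro n
    have hFn : ∀ z ∈ Ioc 0 z₀, ‖F n z‖ = z ^ (β - 1) * (b⁻¹ * z ^ α) ^ n := by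
      rintro z ⟨hz, -⟩
      rw [norm_mul, norm_pow, norm_mul, norm_neg, norm_of_nonneg (rpow_nonneg hz.le _),
        norm_of_nonneg (inv_pos.2 hb).le, norm_of_nonneg (rpow_nonneg hz.le _)]
    rw [setIntegral_congr_fun measurableSet_Ioc hFn,
      integral_Ioc_rpow_mul_mul_rpow_pow hα.le hβ hz₀.le, rpow_add_mul_natCast_eq_pow_mul hz₀, hq]
    ring
  have hsummable : Summable fun n : ℕ => ∫ z in Ioc 0 z₀, ‖F n z‖ := by
    refine Summable.of_nonneg_of_le (fun n => integral_nonneg fun z => norm_nonneg _) (fun n => ?_)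
      ((summable_geometric_of_lt_one hq0 hq1).mul_left (z₀ ^ β / β))
    rw [hnorm]
    gcongr
    exact le_add_of_nonneg_left (by positivity)
  have hterm : ∀ n : ℕ, ∫ z in Ioc 0 z₀, F n z
      = b * (z₀ ^ β / (β * b) * (β / α / (β / α + n) * (-q) ^ n)) := by
    intro n
    rw [integral_Ioc_rpow_mul_mul_rpow_pow hα.le hβ hz₀.le, rpow_add_mul_natCast_eq_pow_mul hz₀, hq]
    field_simp
    ring
  calc ∫ z in Ioc 0 z₀, z ^ (β - 1) / (z ^ α + b)
      = b⁻¹ * ∫ z in Ioc 0 z₀, ∑' n, F n z := by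
        rw [setIntegral_congr_fun measurableSet_Ioc hsum, integral_const_mul,
          inv_mul_cancel_left₀ hb.ne']
    _ = b⁻¹ * ∑' n, ∫ z in Ioc 0 z₀, F n z := by
        rw [integral_tsum_of_summable_integral_norm
          (fun n => integrableOn_Ioc_rpow_mul_mul_rpow_pow hα.le hβ _ _ n) hsummable]
    _ = _ := by
        rw [tsum_congr hterm, tsum_mul_left, tsum_mul_left, inv_mul_cancel_left₀ hb.ne',
          hyp2F1_one_self_one_add (by positivity)]

/-- closed form of the function `U` in eq. (22).
Let `α > 2`, `b > 0` and `z₀ > 0` satisfy `z₀^α < b`.  Then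
`∫_{z₀}^∞ (1 − 1/(1 + b·z^{−α}))·z dz
  = (π/(α·sin(2π/α)))·b^{2/α} − (z₀²/2)·₂F₁(1, 2/α; 1 + 2/α; −z₀^α/b)`. -/
theorem stmt_17 (α b z₀ : ℝ) (hα : 2 < α) (hb : 0 < b) (hz₀ : 0 < z₀)
    (h : z₀ ^ α < b) :
    ∫ z in Set.Ioi z₀, (1 - 1 / (1 + b * z ^ (-α))) * z
      = π / (α * Real.sin (2 * π / α)) * b ^ (2 / α)
        - z₀ ^ 2 / 2 * hyp2F1 1 (2 / α) (1 + 2 / α) (-(z₀ ^ α / b)) := by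
  have hintegrand : ∀ z ∈ Ioi z₀,
      (1 - 1 / (1 + b * z ^ (-α))) * z = b * (z ^ ((2 : ℝ) - 1) / (z ^ α + b)) := by
    intro z hz
    have hz0 : 0 < z := hz₀.trans hz
    have hzα := rpow_pos_of_pos hz0 α
    rw [rpow_neg hz0.le, show (2 : ℝ) - 1 = 1 by norm_num, rpow_one]
    field_simp
    ring
  have hsplit : ∫ z in Ioi z₀, z ^ ((2 : ℝ) - 1) / (z ^ α + b)
      = (∫ z in Ioi 0, z ^ ((2 : ℝ) - 1) / (z ^ α + b))
        - ∫ z in Ioc 0 z₀, z ^ ((2 : ℝ) - 1) / (z ^ α + b) := by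
    rw [← intervalIntegral.integral_of_le hz₀.le, ← intervalIntegral.integral_Ioi_sub_Ioi
      (integrableOn_Ioi_rpow_div_rpow_add two_pos hα hb) hz₀.le, sub_sub_cancel]
  rw [setIntegral_congr_fun measurableSet_Ioi hintegrand, integral_const_mul, hsplit,
    integral_Ioi_rpow_div_rpow_add two_pos hα hb,
    integral_Ioc_rpow_div_rpow_add (by linarith) two_pos hz₀ h, rpow_sub_one hb.ne', rpow_two,
    mul_div_assoc']
  field_simp
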